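/- arXiv:1607.07606 — 2 statements merged into one kernel-verified Lean document; each statement's English description precedes it below -/
import Mathlib

section
/- Assume φ : (0,∞) → (0,∞) satisfies the global scaling condition: there exist a₁, a₂ > 0 and 1/2 < δ₁ ≤ δ₂ < 1 with a₁ λ^{δ₁} ≤ φ(λr)/φ(r) ≤ a₂ λ^{δ₂} for all λ ≥ 1, r > 0. Then there exists a constant c > 1 such that for all x > 0, c⁻¹ · 1/(x·φ(1/x²)) ≤ (1/π) ∫₀^∞ (1 - cos(λx))/φ(λ²) dλ ≤ c · 1/(x·φ(1/x²)). -/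
/-!
Substituting `t = l x` turns the integral into `x⁻¹ ∫₀^∞ (1 - cos t) / ψ (t²) dt` with
`ψ u = φ (u / x²)`, and `ψ` satisfies (H) with the same constants. So it suffices to show that
`∫₀^∞ (1 - cos t) / φ (t²) dt` lies between two multiples of `1 / φ 1` that depend only on the
constants of (H). Comparing `φ (t²)` with `φ 1` through (H): on `(0, 1]` the integrand is at most
`a₂ / (2 φ 1)` because `1 - cos t ≤ t² / 2` and `δ₂ ≤ 1`; on `(1, ∞)` it is at most
`2 t^(-2δ₁) / (a₁ φ 1)`, which is integrable because `2 δ₁ > 1`; on `(1, 2]` it is at least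
`(1 - cos 1) / (4 a₂ φ 1)`.
-/

open MeasureTheory Set Real

/-- Condition (H): global weak lower and upper scaling of orders `δ₁` and `δ₂`. -/
def IsGlobalScaling (φ : ℝ → ℝ) (a₁ a₂ δ₁ δ₂ : ℝ) : Prop :=
  ∀ lam ≥ (1:ℝ), ∀ r > (0:ℝ),
    a₁ * lam ^ δ₁ * φ r ≤ φ (lam * r) ∧ φ (lam * r) ≤ a₂ * lam ^ δ₂ * φ r

theorem one_sub_cos_div_nonneg {φ : ℝ → ℝ} (hφ_pos : ∀ x > (0:ℝ), 0 < φ x) {t : ℝ}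
    (ht : 0 < t) : 0 ≤ (1 - cos t) / φ (t ^ 2) :=
  div_nonneg (sub_nonneg.2 (cos_le_one t)) (hφ_pos _ (by positivity)).le

theorem measurable_one_sub_cos_div {φ : ℝ → ℝ} (hφ_meas : Measurable φ) :
    Measurable fun t ↦ (1 - cos t) / φ (t ^ 2) := by
  fun_prop

theorem integral_one_sub_cos_mul_div (φ : ℝ → ℝ) {x : ℝ} (hx : 0 < x) :
    ∫ l in Ioi 0, (1 - cos (l * x)) / φ (l ^ 2)
      = x⁻¹ * ∫ t in Ioi 0, (1 - cos t) / φ (t ^ 2 * (1 / x ^ 2)) := by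
  have h := integral_comp_mul_right_Ioi (fun t ↦ (1 - cos t) / φ (t ^ 2 * (1 / x ^ 2))) 0 hx
  rw [zero_mul, smul_eq_mul] at h
  rw [← h]
  congr! 4 with l
  field_simp

namespace IsGlobalScaling

variable {φ : ℝ → ℝ} {a₁ a₂ δ₁ δ₂ : ℝ}

theorem comp_mul_const (h : IsGlobalScaling φ a₁ a₂ δ₁ δ₂) {c : ℝ} (hc : 0 < c) :
    IsGlobalScaling (fun u ↦ φ (u * c)) a₁ a₂ δ₁ δ₂ := by
  intro lam hlam r hr
  simpa only [mul_assoc] using h lam hlam (r * c) (mul_pos hr hc)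

theorem lower_bound_of_one_le (h : IsGlobalScaling φ a₁ a₂ δ₁ δ₂) {s : ℝ} (hs : 1 ≤ s) :
    a₁ * s ^ δ₁ * φ 1 ≤ φ s := by
  simpa using (h s hs 1 one_pos).1

theorem upper_bound_of_one_le (h : IsGlobalScaling φ a₁ a₂ δ₁ δ₂) {s : ℝ} (hs : 1 ≤ s) :
    φ s ≤ a₂ * s ^ δ₂ * φ 1 := by
  simpa using (h s hs 1 one_pos).2

theorem rpow_mul_apply_one_le_of_le_one (h : IsGlobalScaling φ a₁ a₂ δ₁ δ₂) {s : ℝ}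
    (hs : 0 < s) (hs1 : s ≤ 1) : s ^ δ₂ * φ 1 ≤ a₂ * φ s := by
  have hcmp := (h s⁻¹ ((one_le_inv₀ hs).2 hs1) s hs).2
  rw [inv_mul_cancel₀ hs.ne', inv_rpow hs.le, mul_right_comm, ← div_eq_mul_inv,
    le_div_iff₀ (by positivity)] at hcmp
  linarith

variable (h : IsGlobalScaling φ a₁ a₂ δ₁ δ₂) (hφ_pos : ∀ x > (0:ℝ), 0 < φ x)
include h hφ_pos

theorem one_sub_cos_div_le_of_le_one (hδ₂ : δ₂ ≤ 1) {t : ℝ} (ht : 0 < t) (ht1 : t ≤ 1) :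
    (1 - cos t) / φ (t ^ 2) ≤ a₂ / 2 / φ 1 := by
  have hs : 0 < t ^ 2 := by positivity
  have hs1 : t ^ 2 ≤ 1 := by nlinarith
  have hφs := hφ_pos _ hs
  have hφ1 := hφ_pos 1 one_pos
  have hcmp := h.rpow_mul_apply_one_le_of_le_one hs hs1
  have hpow : t ^ 2 ≤ (t ^ 2) ^ δ₂ := by
    simpa using rpow_le_rpow_of_exponent_ge hs hs1 hδ₂
  calc (1 - cos t) / φ (t ^ 2) ≤ t ^ 2 / 2 / φ (t ^ 2) := by
        gcongr
        linarith [one_sub_sq_div_two_le_cos (x := t)]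
    _ ≤ a₂ / 2 / φ 1 := by
        rw [div_le_div_iff₀ hφs hφ1]
        nlinarith [mul_le_mul_of_nonneg_right hpow hφ1.le]

theorem one_sub_cos_div_le_rpow (ha₁ : 0 < a₁) {t : ℝ} (ht : 1 ≤ t) :
    (1 - cos t) / φ (t ^ 2) ≤ 2 / (a₁ * φ 1) * t ^ (-(2 * δ₁)) := by
  have hcmp := h.lower_bound_of_one_le (one_le_pow₀ ht : 1 ≤ t ^ 2)
  have hφ1 := hφ_pos 1 one_pos
  have hpow : (t ^ 2) ^ δ₁ = t ^ (2 * δ₁) := by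
    rw [← rpow_natCast_mul (by linarith)]
    norm_num
  rw [hpow] at hcmp
  have htpos : 0 < t ^ (2 * δ₁) := by positivity
  calc (1 - cos t) / φ (t ^ 2) ≤ 2 / (a₁ * t ^ (2 * δ₁) * φ 1) :=
        div_le_div₀ zero_le_two (by linarith [neg_one_le_cos t]) (by positivity) hcmp
    _ = 2 / (a₁ * φ 1) * t ^ (-(2 * δ₁)) := by
        rw [rpow_neg (by linarith)]
        field_simp

theorem le_one_sub_cos_div (ha₂ : 0 < a₂) (hδ₂ : δ₂ ≤ 1) {t : ℝ} (ht : t ∈ Ioc 1 2) :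
    (1 - cos 1) / (4 * a₂ * φ 1) ≤ (1 - cos t) / φ (t ^ 2) := by
  obtain ⟨ht1, ht2⟩ := ht
  have hs1 : 1 ≤ t ^ 2 := one_le_pow₀ ht1.le
  have hpow : (t ^ 2) ^ δ₂ ≤ 4 :=
    calc (t ^ 2) ^ δ₂ ≤ (t ^ 2) ^ (1:ℝ) := rpow_le_rpow_of_exponent_le hs1 hδ₂
      _ ≤ 4 := by rw [rpow_one]; nlinarith
  have hφ1 := hφ_pos 1 one_pos
  have hφt : φ (t ^ 2) ≤ 4 * a₂ * φ 1 :=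
    calc φ (t ^ 2) ≤ a₂ * (t ^ 2) ^ δ₂ * φ 1 := h.upper_bound_of_one_le hs1
      _ ≤ 4 * a₂ * φ 1 := by nlinarith [mul_le_mul_of_nonneg_left hpow (mul_pos ha₂ hφ1).le]
  have hcos : cos t ≤ cos 1 :=
    cos_le_cos_of_nonneg_of_le_pi zero_le_one (ht2.trans two_le_pi) ht1.le
  exact div_le_div₀ (by linarith [cos_le_one t]) (by linarith) (hφ_pos _ (by positivity)) hφt

variable (hφ_meas : Measurable φ)
include hφ_meas

theorem integrableOn_one_sub_cos_div_Ioc (hδ₂ : δ₂ ≤ 1) :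
    IntegrableOn (fun t ↦ (1 - cos t) / φ (t ^ 2)) (Ioc 0 1) := by
  refine Integrable.mono' (integrableOn_const measure_Ioc_lt_top.ne (C := a₂ / 2 / φ 1))
    (measurable_one_sub_cos_div hφ_meas).aestronglyMeasurable
    (ae_restrict_of_forall_mem measurableSet_Ioc fun t ht ↦ ?_)
  rw [norm_of_nonneg (one_sub_cos_div_nonneg hφ_pos ht.1)]
  exact h.one_sub_cos_div_le_of_le_one hφ_pos hδ₂ ht.1 ht.2

theorem integrableOn_one_sub_cos_div_Ioi (ha₁ : 0 < a₁) (hδ₁ : 1 / 2 < δ₁) :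
    IntegrableOn (fun t ↦ (1 - cos t) / φ (t ^ 2)) (Ioi 1) := by
  refine Integrable.mono'
    ((integrableOn_Ioi_rpow_of_lt (a := -(2 * δ₁)) (by linarith) one_pos).const_mul
      (2 / (a₁ * φ 1)))
    (measurable_one_sub_cos_div hφ_meas).aestronglyMeasurable
    (ae_restrict_of_forall_mem measurableSet_Ioi fun t ht ↦ ?_)
  rw [norm_of_nonneg (one_sub_cos_div_nonneg hφ_pos (one_pos.trans ht))]
  exact h.one_sub_cos_div_le_rpow hφ_pos ha₁ (le_of_lt ht)

theorem integrableOn_one_sub_cos_div (ha₁ : 0 < a₁) (hδ₁ : 1 / 2 < δ₁) (hδ₂ : δ₂ ≤ 1) :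
    IntegrableOn (fun t ↦ (1 - cos t) / φ (t ^ 2)) (Ioi 0) := by
  rw [← Ioc_union_Ioi_eq_Ioi zero_le_one]
  exact (h.integrableOn_one_sub_cos_div_Ioc hφ_pos hφ_meas hδ₂).union
    (h.integrableOn_one_sub_cos_div_Ioi hφ_pos hφ_meas ha₁ hδ₁)

theorem integral_one_sub_cos_div_le (ha₁ : 0 < a₁) (hδ₁ : 1 / 2 < δ₁) (hδ₂ : δ₂ ≤ 1) :
    ∫ t in Ioi 0, (1 - cos t) / φ (t ^ 2) ≤ (a₂ / 2 + 2 / (a₁ * (2 * δ₁ - 1))) / φ 1 := by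
  have hnear : ∫ t in Ioc 0 1, (1 - cos t) / φ (t ^ 2) ≤ a₂ / 2 / φ 1 := by
    simpa using setIntegral_mono_on (h.integrableOn_one_sub_cos_div_Ioc hφ_pos hφ_meas hδ₂)
      (integrableOn_const measure_Ioc_lt_top.ne) measurableSet_Ioc
      fun t ht ↦ h.one_sub_cos_div_le_of_le_one hφ_pos hδ₂ ht.1 ht.2
  have htail : ∫ t in Ioi 1, (1 - cos t) / φ (t ^ 2) ≤ 2 / (a₁ * (2 * δ₁ - 1)) / φ 1 := by
    have hrpow := integrableOn_Ioi_rpow_of_lt (a := -(2 * δ₁)) (by linarith) one_pos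
    calc ∫ t in Ioi 1, (1 - cos t) / φ (t ^ 2)
        ≤ ∫ t in Ioi 1, 2 / (a₁ * φ 1) * t ^ (-(2 * δ₁)) :=
          setIntegral_mono_on (h.integrableOn_one_sub_cos_div_Ioi hφ_pos hφ_meas ha₁ hδ₁)
            (hrpow.const_mul _) measurableSet_Ioi
            fun t ht ↦ h.one_sub_cos_div_le_rpow hφ_pos ha₁ (le_of_lt ht)
      _ = 2 / (a₁ * (2 * δ₁ - 1)) / φ 1 := by
          rw [integral_const_mul, integral_Ioi_rpow_of_lt (by linarith) one_pos, one_rpow]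
          have hφ1 := (hφ_pos 1 one_pos).ne'
          have hδ : -(2 * δ₁) + 1 ≠ 0 := by linarith
          have hδ' : 2 * δ₁ - 1 ≠ 0 := by linarith
          field_simp
          ring
  rw [← Ioc_union_Ioi_eq_Ioi zero_le_one, setIntegral_union (Ioc_disjoint_Ioi le_rfl)
    measurableSet_Ioi (h.integrableOn_one_sub_cos_div_Ioc hφ_pos hφ_meas hδ₂)
    (h.integrableOn_one_sub_cos_div_Ioi hφ_pos hφ_meas ha₁ hδ₁), add_div]
  exact add_le_add hnear htail

theorem le_integral_one_sub_cos_div (ha₁ : 0 < a₁) (ha₂ : 0 < a₂) (hδ₁ : 1 / 2 < δ₁)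
    (hδ₂ : δ₂ ≤ 1) :
    (1 - cos 1) / (4 * a₂) / φ 1 ≤ ∫ t in Ioi 0, (1 - cos t) / φ (t ^ 2) := by
  have hint := h.integrableOn_one_sub_cos_div hφ_pos hφ_meas ha₁ hδ₁ hδ₂
  calc (1 - cos 1) / (4 * a₂) / φ 1
        = (1 - cos 1) / (4 * a₂ * φ 1) * volume.real (Ioc 1 2) := by
        rw [Real.volume_real_Ioc_of_le one_le_two, div_div]
        norm_num
    _ ≤ ∫ t in Ioc 1 2, (1 - cos t) / φ (t ^ 2) :=
        setIntegral_ge_of_const_le_real measurableSet_Ioc measure_Ioc_lt_top.ne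
          (fun t ht ↦ h.le_one_sub_cos_div hφ_pos ha₂ hδ₂ ht)
          (hint.mono_set fun t ht ↦ zero_lt_one.trans ht.1)
    _ ≤ ∫ t in Ioi 0, (1 - cos t) / φ (t ^ 2) :=
        setIntegral_mono_set hint
          (ae_restrict_of_forall_mem measurableSet_Ioi fun _ ↦ one_sub_cos_div_nonneg hφ_pos)
          (LE.le.eventuallyLE fun t ht ↦ zero_lt_one.trans ht.1)

end IsGlobalScaling

theorem exists_one_lt_inv_mul_le_and_le_mul {A B p : ℝ} (hA : 0 < A) (hB : 0 < B)
    (hp : 0 < p) :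
    ∃ c > (1:ℝ), ∀ u v : ℝ, 0 ≤ v → A * v ≤ u → u ≤ B * v → c⁻¹ * v ≤ p * u ∧ p * u ≤ c * v := by
  have hpA : 0 < (p * A)⁻¹ := by positivity
  have hpB : 0 < p * B := by positivity
  refine ⟨(p * A)⁻¹ + p * B + 1, by linarith, fun u v hv hlow hup ↦ ⟨?_, ?_⟩⟩
  · calc ((p * A)⁻¹ + p * B + 1)⁻¹ * v ≤ p * A * v := by
          gcongr
          exact inv_le_of_inv_le₀ (by positivity) (by linarith)
      _ ≤ p * u := by rw [mul_assoc]; gcongr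
  · calc p * u ≤ p * B * v := by rw [mul_assoc]; gcongr
      _ ≤ ((p * A)⁻¹ + p * B + 1) * v := by gcongr; linarith

theorem h_two_sided_estimate_general
    (φ : ℝ → ℝ) (hφ_meas : Measurable φ) (hφ_pos : ∀ x > (0:ℝ), 0 < φ x)
    (a₁ a₂ δ₁ δ₂ : ℝ) (ha₁ : 0 < a₁) (ha₂ : 0 < a₂)
    (hδ₁ : 1 / 2 < δ₁) (hδ₂ : δ₂ < 1)
    (hH : ∀ lam ≥ (1:ℝ), ∀ r > (0:ℝ),
      a₁ * lam ^ δ₁ * φ r ≤ φ (lam * r) ∧ φ (lam * r) ≤ a₂ * lam ^ δ₂ * φ r) :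
    ∃ c > (1:ℝ), ∀ x > (0:ℝ),
      c⁻¹ * (1 / (x * φ (1 / x ^ 2)))
        ≤ (1 / Real.pi) * ∫ l in Ioi (0:ℝ), (1 - Real.cos (l * x)) / φ (l ^ 2) ∧
      (1 / Real.pi) * (∫ l in Ioi (0:ℝ), (1 - Real.cos (l * x)) / φ (l ^ 2))
        ≤ c * (1 / (x * φ (1 / x ^ 2))) := by
  have hA : 0 < (1 - cos 1) / (4 * a₂) := div_pos (by linarith [cos_one_le]) (by positivity)
  have hB : 0 < a₂ / 2 + 2 / (a₁ * (2 * δ₁ - 1)) := by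
    have : 0 < 2 * δ₁ - 1 := by linarith
    positivity
  obtain ⟨c, hc, hcuv⟩ := exists_one_lt_inv_mul_le_and_le_mul hA hB (one_div_pos.2 pi_pos)
  refine ⟨c, hc, fun x hx ↦ ?_⟩
  have hψ : IsGlobalScaling (fun u ↦ φ (u * (1 / x ^ 2))) a₁ a₂ δ₁ δ₂ :=
    IsGlobalScaling.comp_mul_const hH (by positivity)
  have hψ_pos : ∀ u > (0:ℝ), 0 < φ (u * (1 / x ^ 2)) := fun u hu ↦ hφ_pos _ (by positivity)
  have hψ_meas : Measurable fun u ↦ φ (u * (1 / x ^ 2)) := by fun_prop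
  have hlow := hψ.le_integral_one_sub_cos_div hψ_pos hψ_meas ha₁ ha₂ hδ₁ hδ₂.le
  have hup := hψ.integral_one_sub_cos_div_le hψ_pos hψ_meas ha₁ hδ₁ hδ₂.le
  rw [one_mul] at hlow hup
  rw [integral_one_sub_cos_mul_div φ hx]
  refine hcuv _ _ (by have := hφ_pos _ (by positivity : (0:ℝ) < 1 / x ^ 2); positivity) ?_ ?_
  · calc _ = x⁻¹ * ((1 - cos 1) / (4 * a₂) / φ (1 / x ^ 2)) := by ring
      _ ≤ _ := by gcongr
  · calc _ ≤ x⁻¹ * ((a₂ / 2 + 2 / (a₁ * (2 * δ₁ - 1))) / φ (1 / x ^ 2)) := by gcongr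
      _ = _ := by ring

theorem h_two_sided_estimate
    (φ : ℝ → ℝ) (hφ_meas : Measurable φ) (hφ_pos : ∀ x > (0:ℝ), 0 < φ x)
    (a₁ a₂ δ₁ δ₂ : ℝ) (ha₁ : 0 < a₁) (ha₂ : 0 < a₂)
    (hδ₁ : 1 / 2 < δ₁) (hδ₁₂ : δ₁ ≤ δ₂) (hδ₂ : δ₂ < 1)
    (hH : ∀ lam ≥ (1:ℝ), ∀ r > (0:ℝ),
      a₁ * lam ^ δ₁ * φ r ≤ φ (lam * r) ∧ φ (lam * r) ≤ a₂ * lam ^ δ₂ * φ r) :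
    ∃ c > (1:ℝ), ∀ x > (0:ℝ),
      c⁻¹ * (1 / (x * φ (1 / x ^ 2)))
        ≤ (1 / Real.pi) * ∫ l in Ioi (0:ℝ), (1 - Real.cos (l * x)) / φ (l ^ 2) ∧
      (1 / Real.pi) * (∫ l in Ioi (0:ℝ), (1 - Real.cos (l * x)) / φ (l ^ 2))
        ≤ c * (1 / (x * φ (1 / x ^ 2))) :=
  h_two_sided_estimate_general φ hφ_meas hφ_pos a₁ a₂ δ₁ δ₂ ha₁ ha₂ hδ₁ hδ₂ hH
end

section
/- Given the two-sided Green function estimate G(x,y) ≍ a(x,y)/(Φ⁻¹(a(x,y)) ∨ |x−y|) with a(x,y) = Φ(δ(x))^{1/2} Φ(δ(y))^{1/2}, the 3G-inequality holds: there is a constant c̃ > 0 such that for all x, y, z ∈ (a,b), G(x,y)G(y,z)/G(x,z) ≤ c̃ · Φ(δ(y)) · (|x−z| ∨ Φ⁻¹(a(x,z))) / ((|x−y| ∨ Φ⁻¹(a(x,y))) · (|y−z| ∨ Φ⁻¹(a(y,z)))). -/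
/-!
Two-sided comparability `G ≍ B` with constant `c₄` makes the 3G ratio `G(x,y) G(y,z) / G(x,z)`
comparable, with constant `c₄³`, to the same ratio for `B = a / (Φ⁻¹(a) ∨ |x - y|)`. For `B` the
ratio is computed exactly: since `a(x,y) a(y,z) = Φ(δ(y)) a(x,z)`, the numerators of `B` cancel up
to the factor `Φ(δ(y))`, leaving only the denominators.
-/

open Set

theorem Real.sqrt_mul_mul_sqrt_mul {p q r : ℝ} (hp : 0 ≤ p) (hq : 0 ≤ q) :
    √(p * q) * √(q * r) = q * √(p * r) := by
  rw [← Real.sqrt_mul (by positivity), show p * q * (q * r) = q ^ 2 * (p * r) by ring,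
    Real.sqrt_mul (by positivity), Real.sqrt_sq hq]

theorem div_mul_div_div_div_eq_of_mul_eq {a₁ a₂ a₃ m₁ m₂ m₃ φ : ℝ}
    (ha₃ : a₃ ≠ 0) (h : a₁ * a₂ = φ * a₃) :
    a₁ / m₁ * (a₂ / m₂) / (a₃ / m₃) = φ * m₃ / (m₁ * m₂) := by
  rw [div_mul_div_comm, h, div_div_eq_mul_div]
  field_simp

theorem threeG_ratio_le_of_comparable {α : Type*} {S : Set α} {G B : α → α → ℝ} {c : ℝ}
    (hc : 0 < c) (hB : ∀ x ∈ S, ∀ y ∈ S, 0 < B x y)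
    (hG : ∀ x ∈ S, ∀ y ∈ S, c⁻¹ * B x y ≤ G x y ∧ G x y ≤ c * B x y)
    {x y z : α} (hx : x ∈ S) (hy : y ∈ S) (hz : z ∈ S) :
    G x y * G y z / G x z ≤ c ^ 3 * (B x y * B y z / B x z) := by
  have hG_nonneg : ∀ u ∈ S, ∀ v ∈ S, 0 ≤ G u v := fun u hu v hv =>
    (mul_pos (inv_pos.2 hc) (hB u hu v hv)).le.trans (hG u hu v hv).1
  calc G x y * G y z / G x z
      ≤ c * B x y * (c * B y z) / (c⁻¹ * B x z) :=
        div_le_div₀ (by have := hB x hx y hy; have := hB y hy z hz; positivity)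
          (mul_le_mul (hG x hx y hy).2 (hG y hy z hz).2 (hG_nonneg y hy z hz)
            (mul_pos hc (hB x hx y hy)).le)
          (mul_pos (inv_pos.2 hc) (hB x hx z hz)) (hG x hx z hz).1
    _ = c ^ 3 * (B x y * B y z / B x z) := by
        have := hB x hx z hz
        field_simp

theorem threeG_inequality_general
    (a b : ℝ)
    (Φ Φinv δ : ℝ → ℝ)
    (hδ_pos : ∀ x ∈ Ioo a b, 0 < δ x)
    (hΦ_pos : ∀ s > (0:ℝ), 0 < Φ s)
    (hΦinv_pos : ∀ s > (0:ℝ), 0 < Φinv s)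
    (afun : ℝ → ℝ → ℝ)
    (hafun : ∀ x y, afun x y = Real.sqrt (Φ (δ x) * Φ (δ y)))
    (G : ℝ → ℝ → ℝ) (c₄ : ℝ) (hc₄ : 0 < c₄)
    (hG : ∀ x ∈ Ioo a b, ∀ y ∈ Ioo a b,
      c₄⁻¹ * (afun x y / (max (Φinv (afun x y)) |x - y|)) ≤ G x y ∧
      G x y ≤ c₄ * (afun x y / (max (Φinv (afun x y)) |x - y|))) :
    ∃ c > (0:ℝ), ∀ x ∈ Ioo a b, ∀ y ∈ Ioo a b, ∀ z ∈ Ioo a b,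
      G x y * G y z / G x z ≤
        c * Φ (δ y) * (max |x - z| (Φinv (afun x z))) /
          ((max |x - y| (Φinv (afun x y))) * (max |y - z| (Φinv (afun y z)))) := by
  have ha_pos : ∀ u ∈ Ioo a b, ∀ v ∈ Ioo a b, 0 < afun u v := fun u hu v hv => by
    rw [hafun]
    exact Real.sqrt_pos.2 (mul_pos (hΦ_pos _ (hδ_pos u hu)) (hΦ_pos _ (hδ_pos v hv)))
  have hM_pos : ∀ u ∈ Ioo a b, ∀ v ∈ Ioo a b, 0 < max (Φinv (afun u v)) |u - v| :=
    fun u hu v hv => lt_max_of_lt_left (hΦinv_pos _ (ha_pos u hu v hv))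
  refine ⟨c₄ ^ 3, by positivity, fun x hx y hy z hz => ?_⟩
  have ha_mul : afun x y * afun y z = Φ (δ y) * afun x z := by
    simp only [hafun]
    exact Real.sqrt_mul_mul_sqrt_mul (hΦ_pos _ (hδ_pos x hx)).le (hΦ_pos _ (hδ_pos y hy)).le
  calc G x y * G y z / G x z
      ≤ c₄ ^ 3 * (afun x y / max (Φinv (afun x y)) |x - y| *
          (afun y z / max (Φinv (afun y z)) |y - z|) / (afun x z / max (Φinv (afun x z)) |x - z|)) :=
        threeG_ratio_le_of_comparable hc₄ (fun u hu v hv => div_pos (ha_pos u hu v hv)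
          (hM_pos u hu v hv)) hG hx hy hz
    _ = _ := by
        rw [div_mul_div_div_div_eq_of_mul_eq (ha_pos x hx z hz).ne' ha_mul, max_comm |x - z|,
          max_comm |x - y|, max_comm |y - z|]
        ring

theorem threeG_inequality
    (a b : ℝ) (hab : a < b)
    (Φ Φinv δ : ℝ → ℝ)
    (hδ_pos : ∀ x ∈ Ioo a b, 0 < δ x)
    (hΦ_pos : ∀ s > (0:ℝ), 0 < Φ s)
    (hΦinv_pos : ∀ s > (0:ℝ), 0 < Φinv s)
    (afun : ℝ → ℝ → ℝ)
    (hafun : ∀ x y, afun x y = Real.sqrt (Φ (δ x) * Φ (δ y)))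
    (G : ℝ → ℝ → ℝ) (c₄ : ℝ) (hc₄ : 0 < c₄)
    (hG : ∀ x ∈ Ioo a b, ∀ y ∈ Ioo a b,
      c₄⁻¹ * (afun x y / (max (Φinv (afun x y)) |x - y|)) ≤ G x y ∧
      G x y ≤ c₄ * (afun x y / (max (Φinv (afun x y)) |x - y|))) :
    ∃ c > (0:ℝ), ∀ x ∈ Ioo a b, ∀ y ∈ Ioo a b, ∀ z ∈ Ioo a b,
      G x y * G y z / G x z ≤
        c * Φ (δ y) * (max |x - z| (Φinv (afun x z))) /
          ((max |x - y| (Φinv (afun x y))) * (max |y - z| (Φinv (afun y z)))) :=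
  threeG_inequality_general a b Φ Φinv δ hδ_pos hΦ_pos hΦinv_pos afun hafun G c₄ hc₄ hG
end
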